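/- If R and S are invertible elements of A⊗A⊗A both satisfying the centralizing conditions R¹⊗R²⊗aR³ = R¹a⊗R²⊗R³, aR¹⊗R²⊗R³ = R¹⊗R²a⊗R³, R¹⊗aR²⊗R³ = R¹⊗R²⊗R³a (for all a ∈ A), and if S¹R³S²⊗R¹⊗R²S³ = 1⊗1⊗1 (written with the flip: S¹mR³S²⊗R¹nR²S³ = m⊗n evaluated at m = n = 1⊗1 in A⊗A), then S¹R²⊗S²R¹⊗S³R³ = 1⊗1⊗1, i.e. S²⊗S¹⊗S³ is a (left) inverse of R in the algebra A⊗A⊗A. -/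

import Mathlib

open TensorProduct

/-!
Write `S = S¹ ⊗ S² ⊗ S³`. The centralizing conditions of `S` say that in the componentwise
algebra `A ⊗ A ⊗ A` a factor `1 ⊗ a ⊗ 1` to the left of `S` may be moved to the right of it as
`1 ⊗ 1 ⊗ a`, and a factor `1 ⊗ 1 ⊗ a` as `a ⊗ 1 ⊗ 1`. Hence for every summand `R¹ ⊗ R² ⊗ R³`
of `R`,
`(1 ⊗ R³ ⊗ R²) S (1 ⊗ R¹ ⊗ 1) = (1 ⊗ 1 ⊗ R²) S (1 ⊗ R¹ ⊗ R³) = S (R² ⊗ R¹ ⊗ R³)`,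
and summing over `R` turns the hypothesis `S¹ ⊗ R³S²R¹ ⊗ R²S³ = 1 ⊗ 1 ⊗ 1` into the claim.
-/

section

open Algebra.TensorProduct

variable {k A : Type*} [CommRing k] [Ring A] [Algebra k A]

theorem one_tmul_tmul_mul_mul_one_tmul_tmul_one {S : A ⊗[k] A ⊗[k] A}
    (h₂ : ∀ a : A, (1 ⊗ₜ a ⊗ₜ 1) * S = S * (1 ⊗ₜ 1 ⊗ₜ a))
    (h₃ : ∀ a : A, (1 ⊗ₜ 1 ⊗ₜ a) * S = S * (a ⊗ₜ 1 ⊗ₜ 1)) (a b c : A) :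
    (1 ⊗ₜ c ⊗ₜ a) * S * (1 ⊗ₜ b ⊗ₜ 1) = S * (a ⊗ₜ b ⊗ₜ c) := by
  calc (1 ⊗ₜ c ⊗ₜ a) * S * (1 ⊗ₜ b ⊗ₜ 1)
      = (1 ⊗ₜ 1 ⊗ₜ a) * ((1 ⊗ₜ c ⊗ₜ 1) * S) * (1 ⊗ₜ b ⊗ₜ 1) := by
        simp only [← mul_assoc, tmul_mul_tmul, mul_one, one_mul]
    _ = (1 ⊗ₜ 1 ⊗ₜ a) * S * (1 ⊗ₜ b ⊗ₜ c) := by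
        simp only [h₂, mul_assoc, tmul_mul_tmul, mul_one, one_mul]
    _ = S * (a ⊗ₜ b ⊗ₜ c) := by
        simp only [h₃, mul_assoc, tmul_mul_tmul, mul_one, one_mul]

end

theorem flip_of_inverse_braiding_is_inverse_R_matrix
    (k A : Type*) [CommRing k] [Ring A] [Algebra k A]
    (ι κ : Type*) (s : Finset ι) (t : Finset κ)
    (x y z : ι → A) (u v w : κ → A)
    (hScen3 : ∀ a : A,
      ∑ j ∈ t, u j ⊗ₜ[k] v j ⊗ₜ[k] (a * w j)
        = ∑ j ∈ t, (u j * a) ⊗ₜ[k] v j ⊗ₜ[k] w j)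
    (hScen2 : ∀ a : A,
      ∑ j ∈ t, u j ⊗ₜ[k] (a * v j) ⊗ₜ[k] w j
        = ∑ j ∈ t, u j ⊗ₜ[k] v j ⊗ₜ[k] (w j * a))
    (hinv : ∑ i ∈ s, ∑ j ∈ t,
        u j ⊗ₜ[k] (z i * v j * x i) ⊗ₜ[k] (y i * w j)
      = (1 : A) ⊗ₜ[k] (1 : A) ⊗ₜ[k] (1 : A)) :
    ∑ i ∈ s, ∑ j ∈ t,
        (u j * y i) ⊗ₜ[k] (v j * x i) ⊗ₜ[k] (w j * z i)
      = (1 : A) ⊗ₜ[k] (1 : A) ⊗ₜ[k] (1 : A) := by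
  set S : A ⊗[k] A ⊗[k] A := ∑ j ∈ t, u j ⊗ₜ v j ⊗ₜ w j
  have h₂ (a : A) : (1 ⊗ₜ a ⊗ₜ 1) * S = S * (1 ⊗ₜ 1 ⊗ₜ a) := by
    simpa [S, Finset.mul_sum, Finset.sum_mul] using hScen2 a
  have h₃ (a : A) : (1 ⊗ₜ 1 ⊗ₜ a) * S = S * (a ⊗ₜ 1 ⊗ₜ 1) := by
    simpa [S, Finset.mul_sum, Finset.sum_mul] using hScen3 a
  rw [← hinv]
  refine Finset.sum_congr rfl fun i _ => ?_
  simpa [S, Finset.mul_sum, Finset.sum_mul, mul_assoc] using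
    (one_tmul_tmul_mul_mul_one_tmul_tmul_one h₂ h₃ (y i) (x i) (z i)).symm
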